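/- arXiv:1512.08838 — 3 statements merged into one kernel-verified Lean document; each statement's English description precedes it below -/
import Mathlib

section
/- Let k be prime, R = (ℤ/kℤ)[T]/(T^k-1), p = p(T) = T^{k-1}+...+T+1. In R, the kernel of multiplication by p equals the ideal (T-1), and the kernel of multiplication by (T-1) equals the ideal (p). -/
open Polynomial

/-- The group ring `R = (ℤ/kℤ)[T]/(T^k - 1)`. -/
abbrev GroupRingR (k : ℕ) : Type :=
  Polynomial (ZMod k) ⧸ Ideal.span {(X : Polynomial (ZMod k)) ^ k - 1}

noncomputable def Tgen (k : ℕ) : GroupRingR k :=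
  Ideal.Quotient.mk _ (X : Polynomial (ZMod k))

noncomputable def pT (k : ℕ) : GroupRingR k := ∑ i ∈ Finset.range k, (Tgen k) ^ i

section aux

variable {F : Type*} [Field F]

lemma aux_quot (π q : F[X]) (hπ : π ≠ 0) {m k : ℕ} (hm : m ≤ k) (hq : q = π ^ k) (f : F[X]) :
    Ideal.Quotient.mk (Ideal.span {q}) (π ^ m * f) = 0 ↔
      Ideal.Quotient.mk (Ideal.span {q}) f ∈
        Ideal.span {Ideal.Quotient.mk (Ideal.span {q}) (π ^ (k - m))} := by
  subst hq
  constructor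
  · intro h
    rw [Ideal.Quotient.eq_zero_iff_mem, Ideal.mem_span_singleton] at h
    have h2 : π ^ m * π ^ (k - m) ∣ π ^ m * f := by
      rwa [← pow_add, Nat.add_sub_cancel' hm]
    have h3 : π ^ (k - m) ∣ f :=
      (mul_dvd_mul_iff_left (pow_ne_zero m hπ)).mp h2
    obtain ⟨g, rfl⟩ := h3
    rw [Ideal.mem_span_singleton, map_mul]
    exact Dvd.intro _ rfl
  · intro h
    rw [Ideal.mem_span_singleton] at h
    obtain ⟨b, hb⟩ := h
    obtain ⟨g, rfl⟩ := Ideal.Quotient.mk_surjective b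
    rw [← map_mul, Ideal.Quotient.eq, Ideal.mem_span_singleton] at hb
    obtain ⟨c, hc⟩ := hb
    rw [Ideal.Quotient.eq_zero_iff_mem, Ideal.mem_span_singleton]
    have hf : f = π ^ (k - m) * g + π ^ k * c := by linear_combination hc
    have : π ^ m * f = π ^ k * (g + π ^ m * c) := by
      rw [hf, mul_add, ← mul_assoc, mul_comm (π ^ m) (π ^ (k - m)), ← pow_add,
        Nat.sub_add_cancel hm]
      ring
    rw [this]
    exact Dvd.intro _ rfl

end aux

/-- In `R = (ℤ/kℤ)[T]/(T^k-1)` with `k` prime, the kernel of multiplication by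
`p = T^{k-1}+⋯+1` equals the ideal `(T-1)`, and the kernel of multiplication by
`(T-1)` equals the ideal `(p)`. -/
theorem stmt_6 (k : ℕ) (hk : Nat.Prime k) :
    (∀ a : GroupRingR k, pT k * a = 0 ↔ a ∈ Ideal.span {Tgen k - 1}) ∧
      (∀ a : GroupRingR k, (Tgen k - 1) * a = 0 ↔ a ∈ Ideal.span {pT k}) := by
  haveI : Fact k.Prime := ⟨hk⟩
  set π : (ZMod k)[X] := X - 1 with hπdef
  have hπ : π ≠ 0 := by
    have := X_sub_C_ne_zero (1 : ZMod k)
    simpa [hπdef] using this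
  have hkey : (X : (ZMod k)[X]) ^ k - 1 = π ^ k := by
    rw [hπdef, sub_pow_char, one_pow]
  have hgeom : (∑ i ∈ Finset.range k, (X : (ZMod k)[X]) ^ i) = π ^ (k - 1) := by
    have h1 : (∑ i ∈ Finset.range k, (X : (ZMod k)[X]) ^ i) * π = π ^ (k - 1) * π := by
      rw [hπdef, geom_sum_mul, ← hπdef, hkey, ← pow_succ,
        Nat.sub_add_cancel hk.one_lt.le]
    exact mul_right_cancel₀ hπ h1
  have hmk : ∀ f : (ZMod k)[X],
      Ideal.Quotient.mk (Ideal.span {(X : (ZMod k)[X]) ^ k - 1}) f = (Ideal.Quotient.mk _ f : GroupRingR k) := fun _ => rfl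
  have hT : Tgen k - 1 = Ideal.Quotient.mk _ π := by
    rw [hπdef, map_sub, map_one]; rfl
  have hp : pT k = Ideal.Quotient.mk _ (π ^ (k - 1)) := by
    rw [← hgeom, pT, map_sum]
    simp [Tgen, ← map_pow]
  constructor
  · intro a
    obtain ⟨f, rfl⟩ := Ideal.Quotient.mk_surjective a
    rw [hp, ← map_mul]
    have h := aux_quot (k := k) π ((X : (ZMod k)[X]) ^ k - 1) hπ (Nat.sub_le k 1) hkey f
    rw [Nat.sub_sub_self hk.one_lt.le, pow_one] at h
    rw [← hT] at h
    exact h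
  · intro a
    obtain ⟨f, rfl⟩ := Ideal.Quotient.mk_surjective a
    rw [hT, ← map_mul]
    have h := aux_quot (k := k) π ((X : (ZMod k)[X]) ^ k - 1) hπ hk.one_lt.le hkey f
    rw [pow_one] at h
    rw [← hp] at h
    exact h
end

section
/- (Lemma 3.8, algebraic core) Let k be prime, R = (ℤ/kℤ)[T]/(T^k-1), and p = T^{k-1}+...+1 ∈ R. Suppose given elements a_0 ∈ ℤ/kℤ and a_1, a_2, ..., a_{2N} ∈ R and units c_0^1, c_0^2, c_1^1, c_1^2, ..., of (ℤ/kℤ)^× such that the square relations hold: a_1 · (c_0^1 p) = (c_0^2 p) · a_0, a_2 · (T-1) = (T-1) · a_1, a_3 · (c_1^1 p) = (c_1^2 p) · a_2, and so on alternating. If a_0 is a unit of ℤ/kℤ, then every a_j (1 ≤ j ≤ 2N) is a unit of R. -/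
open Polynomial

noncomputable def epsR (k : ℕ) : GroupRingR k →+* ZMod k :=
  Ideal.Quotient.lift _ (Polynomial.evalRingHom 1) (by
    intro f hf
    obtain ⟨g, rfl⟩ := Ideal.mem_span_singleton.mp hf
    simp)

@[simp] lemma epsR_mk (k : ℕ) (f : Polynomial (ZMod k)) :
    epsR k (Ideal.Quotient.mk _ f) = f.eval 1 := rfl

@[simp] lemma epsR_algebraMap (k : ℕ) (c : ZMod k) :
    epsR k (algebraMap (ZMod k) (GroupRingR k) c) = c := by
  have : algebraMap (ZMod k) (GroupRingR k) c = Ideal.Quotient.mk _ (C c) := rfl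
  rw [this, epsR_mk, eval_C]

lemma Tpow (k : ℕ) : (Tgen k) ^ k = 1 := by
  have h0 : Ideal.Quotient.mk (Ideal.span {(X : Polynomial (ZMod k)) ^ k - 1})
      ((X : Polynomial (ZMod k)) ^ k - 1) = 0 :=
    Ideal.Quotient.eq_zero_iff_mem.mpr (Ideal.subset_span rfl)
  rw [map_sub, map_pow, map_one] at h0
  have : (Tgen k) ^ k - 1 = 0 := h0
  linear_combination this

lemma Tsub1_mul_pT (k : ℕ) : (Tgen k - 1) * pT k = 0 := by
  have h := geom_sum_mul (Tgen k) k
  rw [Tpow, sub_self] at h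
  rw [pT, mul_comm]
  exact h

lemma eps_zero_factor (k : ℕ) {x : GroupRingR k} (h : epsR k x = 0) :
    ∃ y, x = (Tgen k - 1) * y := by
  obtain ⟨f, rfl⟩ := Ideal.Quotient.mk_surjective x
  have hr : IsRoot f 1 := by simpa using h
  obtain ⟨g, hg⟩ := (dvd_iff_isRoot.mpr hr)
  refine ⟨Ideal.Quotient.mk _ g, ?_⟩
  rw [hg]
  simp [Tgen, map_mul]

lemma X_pow_sub_one_eq (k : ℕ) (hk : Nat.Prime k) :
    ((X : Polynomial (ZMod k)) - 1) ^ k = (X : Polynomial (ZMod k)) ^ k - 1 := by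
  haveI : Fact (Nat.Prime k) := ⟨hk⟩
  have := sub_pow_char (X : Polynomial (ZMod k)) 1 (p := k)
  simpa using this

lemma Tsub1_nilpotent (k : ℕ) (hk : Nat.Prime k) : (Tgen k - 1) ^ k = 0 := by
  have h1 : (Tgen k - 1) ^ k
      = Ideal.Quotient.mk _ (((X : Polynomial (ZMod k)) - 1) ^ k) := by
    simp [Tgen]
  rw [h1, X_pow_sub_one_eq k hk, Ideal.Quotient.eq_zero_iff_mem]
  exact Ideal.subset_span rfl

lemma isUnit_of_epsR (k : ℕ) (hk : Nat.Prime k) {x : GroupRingR k}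
    (h : IsUnit (epsR k x)) : IsUnit x := by
  obtain ⟨y, hy⟩ := eps_zero_factor k (x := x - algebraMap (ZMod k) _ (epsR k x)) (by simp)
  have hx : x = (Tgen k - 1) * y + algebraMap (ZMod k) _ (epsR k x) := by
    linear_combination hy
  rw [hx]
  refine IsNilpotent.isUnit_add_right_of_commute ⟨k, ?_⟩
    (h.map (algebraMap (ZMod k) (GroupRingR k))) (Commute.all _ _)
  rw [mul_pow, Tsub1_nilpotent k hk, zero_mul]

lemma mul_pT_eq (k : ℕ) (x : GroupRingR k) :
    x * pT k = algebraMap (ZMod k) _ (epsR k x) * pT k := by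
  obtain ⟨y, hy⟩ := eps_zero_factor k (x := x - algebraMap (ZMod k) _ (epsR k x)) (by simp)
  have : (x - algebraMap (ZMod k) _ (epsR k x)) * pT k = 0 := by
    rw [hy, mul_assoc, mul_comm y, ← mul_assoc, Tsub1_mul_pT, zero_mul]
  linear_combination this

lemma pT_inj (k : ℕ) (hk : Nat.Prime k) {d : ZMod k}
    (h : algebraMap (ZMod k) (GroupRingR k) d * pT k = 0) : d = 0 := by
  haveI : Fact (Nat.Prime k) := ⟨hk⟩
  by_contra hd
  have hs : pT k = Ideal.Quotient.mk _ (∑ i ∈ Finset.range k, (X : Polynomial (ZMod k)) ^ i) := by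
    simp [pT, Tgen]
  have hmem : (C d * ∑ i ∈ Finset.range k, (X : Polynomial (ZMod k)) ^ i) ∈
      Ideal.span {(X : Polynomial (ZMod k)) ^ k - 1} := by
    rw [← Ideal.Quotient.eq_zero_iff_mem, map_mul, ← hs]
    exact h
  have hdvd : ((X : Polynomial (ZMod k)) ^ k - 1) ∣
      C d * ∑ i ∈ Finset.range k, (X : Polynomial (ZMod k)) ^ i :=
    Ideal.mem_span_singleton.mp hmem
  have hk2 : 2 ≤ k := hk.two_le
  have hmono := Polynomial.monic_geom_sum_X (R := ZMod k) (n := k) (by omega)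
  have hne : (C d * ∑ i ∈ Finset.range k, (X : Polynomial (ZMod k)) ^ i) ≠ 0 :=
    mul_ne_zero (by simpa using hd) hmono.ne_zero
  have hdeg := Polynomial.natDegree_le_of_dvd hdvd hne
  have h1 : ((X : Polynomial (ZMod k)) ^ k - 1).natDegree = k := by
    have h2 : ((X : Polynomial (ZMod k)) ^ k - 1) = X ^ k - C 1 := by simp
    rw [h2, Polynomial.natDegree_X_pow_sub_C]
  have h2 : (C d * ∑ i ∈ Finset.range k, (X : Polynomial (ZMod k)) ^ i).natDegree ≤ k - 1 := by
    refine le_trans Polynomial.natDegree_mul_le ?_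
    simp only [Polynomial.natDegree_C, zero_add]
    refine Polynomial.natDegree_sum_le_of_forall_le _ _ ?_
    intro i hi
    simp only [Polynomial.natDegree_X_pow]
    exact Nat.le_sub_one_of_lt (Finset.mem_range.mp hi)
  omega

lemma eps_of_ann (k : ℕ) (hk : Nat.Prime k) {x : GroupRingR k}
    (h : x * (Tgen k - 1) = 0) : epsR k x = 0 := by
  haveI : Fact (Nat.Prime k) := ⟨hk⟩
  obtain ⟨f, rfl⟩ := Ideal.Quotient.mk_surjective x
  have hmem : (f * ((X : Polynomial (ZMod k)) - 1)) ∈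
      Ideal.span {(X : Polynomial (ZMod k)) ^ k - 1} := by
    rw [← Ideal.Quotient.eq_zero_iff_mem]
    simpa [Tgen] using h
  obtain ⟨g, hg⟩ := Ideal.mem_span_singleton.mp hmem
  have hk1 : k = (k - 1) + 1 := (Nat.succ_pred_eq_of_pos hk.pos).symm
  have hXne : ((X : Polynomial (ZMod k)) - 1) ≠ 0 := by
    simpa using Polynomial.X_sub_C_ne_zero (1 : ZMod k)
  have hp : ((X : Polynomial (ZMod k)) - 1) ^ k
      = ((X : Polynomial (ZMod k)) - 1) * ((X : Polynomial (ZMod k)) - 1) ^ (k - 1) := by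
    rw [← pow_succ', Nat.sub_add_cancel hk.one_lt.le]
  have hcancel : f = ((X : Polynomial (ZMod k)) - 1) ^ (k - 1) * g := by
    apply mul_left_cancel₀ hXne
    rw [← X_pow_sub_one_eq k hk] at hg
    calc ((X : Polynomial (ZMod k)) - 1) * f = f * ((X : Polynomial (ZMod k)) - 1) := mul_comm _ _
    _ = _ := by rw [hg, hp]; ring
  rw [epsR_mk, hcancel]
  have hpos : 0 < k - 1 := by have := hk.two_le; omega
  simp [eval_pow, zero_pow hpos.ne']

/-- Algebraic core of Lemma 3.8: a chain map `(a_j)` between two copies of the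
periodic complex with differentials alternately `c·p` and `(T-1)`, with `a_0` a
unit of `ℤ/kℤ`, has all components `a_1, …, a_{2N}` units of `R`. -/
theorem stmt_7 (k : ℕ) (hk : Nat.Prime k) (N : ℕ)
    (a₀ : ZMod k) (a : ℕ → GroupRingR k)
    (ha0 : a 0 = algebraMap (ZMod k) (GroupRingR k) a₀)
    (c1 c2 : ℕ → (ZMod k)ˣ)
    (hodd : ∀ i : ℕ, i < N →
      a (2 * i + 1) * (algebraMap (ZMod k) (GroupRingR k) (c1 i : ZMod k) * pT k) =
        (algebraMap (ZMod k) (GroupRingR k) (c2 i : ZMod k) * pT k) * a (2 * i))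
    (heven : ∀ i : ℕ, i < N →
      a (2 * i + 2) * (Tgen k - 1) = (Tgen k - 1) * a (2 * i + 1))
    (hu : IsUnit a₀) :
    ∀ j : ℕ, 1 ≤ j → j ≤ 2 * N → IsUnit (a j) := by
  haveI : Fact (Nat.Prime k) := ⟨hk⟩
  have stepOdd : ∀ i, i < N → IsUnit (epsR k (a (2*i))) → IsUnit (epsR k (a (2*i+1))) := by
    intro i hi h
    have h1 := hodd i hi
    have l := mul_pT_eq k (a (2*i+1))
    have r := mul_pT_eq k (a (2*i))
    have key : algebraMap (ZMod k) (GroupRingR k)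
        ((c1 i : ZMod k) * epsR k (a (2*i+1)) - (c2 i : ZMod k) * epsR k (a (2*i))) * pT k = 0 := by
      rw [map_sub, sub_mul, map_mul, map_mul]
      linear_combination - (algebraMap (ZMod k) (GroupRingR k) (c1 i : ZMod k)) * l
        + (algebraMap (ZMod k) (GroupRingR k) (c2 i : ZMod k)) * r + h1
    have hc := sub_eq_zero.mp (pT_inj k hk key)
    have hcu : IsUnit ((c1 i : ZMod k) * epsR k (a (2*i+1))) := by
      rw [hc]; exact (c2 i).isUnit.mul h
    exact isUnit_of_mul_isUnit_right hcu
  have stepEven : ∀ i, i < N → IsUnit (epsR k (a (2*i+1))) → IsUnit (epsR k (a (2*i+2))) := by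
    intro i hi h
    have h2 := heven i hi
    have hz : (a (2*i+2) - a (2*i+1)) * (Tgen k - 1) = 0 := by linear_combination h2
    have h3 := eps_of_ann k hk hz
    rw [map_sub, sub_eq_zero] at h3
    rwa [h3]
  have Heven : ∀ i, i ≤ N → IsUnit (epsR k (a (2*i))) := by
    intro i
    induction i with
    | zero => intro _; rw [show 2*0 = 0 from rfl, ha0, epsR_algebraMap]; exact hu
    | succ n ih =>
      intro hn
      have hlt : n < N := hn
      have := stepEven n hlt (stepOdd n hlt (ih hlt.le))
      simpa [show 2*(n+1) = 2*n+2 by ring] using this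
  intro j h1 h2
  apply isUnit_of_epsR k hk
  rcases Nat.even_or_odd j with ⟨i, hi⟩ | ⟨i, hi⟩
  · have hij : j = 2 * i := by omega
    subst hij
    exact Heven i (by omega)
  · have hij : j = 2 * i + 1 := by omega
    subst hij
    exact stepOdd i (by omega) (Heven i (by omega))
end

section
/- Base case of Lemma 3.8: let k be prime, R = (ℤ/kℤ)[T]/(T^k-1), p = T^{k-1}+...+1. If a ∈ R, u ∈ ℤ/kℤ is a unit, and c, c' are units of ℤ/kℤ with a·(c·p) = (c'·p)·u in R, then a is a unit of R. -/
open Polynomial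

/-!
In characteristic `k` we have `T^k - 1 = (T - 1)^k` and `p = (T - 1)^(k-1)`. Hence `T - 1` is
nilpotent in `R`, and `x * p = 0` forces `T - 1 ∣ x` (cancel `(X - 1)^(k-1)` in the polynomial
ring). The hypothesis says `(a * c - c' * u) * p = 0`, so `a * c` is the unit `c' * u` plus a
nilpotent, hence a unit.
-/

namespace Polynomial

variable {R : Type*} [CommRing R] (p : ℕ) [Fact p.Prime] [CharP R p]

theorem X_sub_one_pow_char : (X - 1 : R[X]) ^ p = X ^ p - 1 := by
  simpa using sub_pow_char (X : R[X]) 1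

theorem geom_sum_X_eq_X_sub_one_pow :
    ∑ i ∈ Finset.range p, (X : R[X]) ^ i = (X - 1) ^ (p - 1) := by
  refine ((monic_X_sub_C (1 : R)).isRegular.right).eq_iff.mp ?_
  simp only [C_1, geom_sum_mul, ← pow_succ, Nat.sub_add_cancel (Fact.out : p.Prime).one_le,
    X_sub_one_pow_char]

theorem X_sub_one_dvd_of_X_pow_sub_one_dvd_mul_geom_sum {f : R[X]}
    (hf : X ^ p - 1 ∣ f * ∑ i ∈ Finset.range p, (X : R[X]) ^ i) : X - 1 ∣ f := by
  have hmonic : ((X - 1 : R[X]) ^ (p - 1)).Monic := by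
    simpa using (monic_X_sub_C (1 : R)).pow (p - 1)
  rw [geom_sum_X_eq_X_sub_one_pow, ← X_sub_one_pow_char, ← Nat.sub_add_cancel
    (Fact.out : p.Prime).one_le, pow_succ, mul_comm f] at hf
  exact hmonic.isRegular.left.dvd_cancel_left.mp hf

end Polynomial

namespace GroupRingR

variable (k : ℕ) [Fact k.Prime]

theorem isNilpotent_Tgen_sub_one : IsNilpotent (Tgen k - 1) :=
  ⟨k, by
    rw [Tgen, ← map_one (Ideal.Quotient.mk _), ← map_sub, ← map_pow, X_sub_one_pow_char,
      Ideal.Quotient.eq_zero_iff_mem]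
    exact Ideal.mem_span_singleton_self _⟩

theorem Tgen_sub_one_dvd_of_mul_pT_eq_zero {x : GroupRingR k} (hx : x * pT k = 0) :
    Tgen k - 1 ∣ x := by
  obtain ⟨f, rfl⟩ := Ideal.Quotient.mk_surjective x
  simp only [pT, Tgen, ← map_pow, ← map_sum, ← map_mul, Ideal.Quotient.eq_zero_iff_mem,
    Ideal.mem_span_singleton] at hx
  obtain ⟨g, hg⟩ := X_sub_one_dvd_of_X_pow_sub_one_dvd_mul_geom_sum k hx
  exact ⟨Ideal.Quotient.mk _ g, by rw [hg, map_mul, map_sub, map_one]; rfl⟩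

theorem isUnit_of_mul_pT_eq {a : GroupRingR k} {r : ZMod k} (hr : IsUnit r)
    (h : a * pT k = algebraMap (ZMod k) (GroupRingR k) r * pT k) : IsUnit a := by
  obtain ⟨y, hy⟩ := Tgen_sub_one_dvd_of_mul_pT_eq_zero k (x := a - algebraMap _ _ r)
    (by rw [sub_mul, h, sub_self])
  have hnil : IsNilpotent ((Tgen k - 1) * y) := (Commute.all _ _).isNilpotent_mul_right (isNilpotent_Tgen_sub_one k)
  rw [sub_eq_iff_eq_add'] at hy
  exact hy ▸ hnil.isUnit_add_left_of_commute (hr.map _) (Commute.all _ _)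

end GroupRingR

/-- Base case of Lemma 3.8: if `a·(c·p) = (c'·p)·u` in `R` with `u, c, c'` units of
`ℤ/kℤ` and `k` prime, then `a` is a unit of `R`. -/
theorem stmt_8 (k : ℕ) (hk : Nat.Prime k) (a : GroupRingR k) (u c c' : (ZMod k)ˣ)
    (h : a * (algebraMap (ZMod k) (GroupRingR k) (c : ZMod k) * pT k) =
      (algebraMap (ZMod k) (GroupRingR k) (c' : ZMod k) * pT k) *
        algebraMap (ZMod k) (GroupRingR k) (u : ZMod k)) :
    IsUnit a := by
  have : Fact k.Prime := ⟨hk⟩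
  have hac : a * algebraMap (ZMod k) (GroupRingR k) (c : ZMod k) * pT k =
      algebraMap (ZMod k) (GroupRingR k) ((c' * u : (ZMod k)ˣ) : ZMod k) * pT k := by
    rw [Units.val_mul, map_mul]
    linear_combination h
  exact isUnit_of_mul_isUnit_left (GroupRingR.isUnit_of_mul_pT_eq k (c' * u).isUnit hac)
end
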